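/- Theorem 2 (asymptotic stability of MPC with charging constraints): Suppose V is nonempty, α_d·tmax ≤ 1, and t_hor ≥ 2·tmax + 2·⌈(α_d/α_c)·tmax⌉ (the integer form of the paper's bound t_hor ≥ 2(1 + α_d/α_c)·max t(i,j)). There exists ρ̄ > 0 (depending only on N, V, t, α_c, α_d, and t_hor) such that for all weights 0 ≤ ρ₁, ρ₂, ρ_c < ρ̄ and every MPC trajectory of the undisturbed augmented system starting from any feasible augmented state, there exists a time T with d(i,j)(τ) = 0 for all i, j ∈ N and all τ ≥ T; i.e., the model predictive controller with charging constraints drives the number of waiting customers to zero. -/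

import Mathlib

/-! ## AMoD model (Zhang, Rossi, Pavone) -/

/-- A state of the AMoD system: waiting customers `d`, travel indicators `p`,
waiting-vehicle indicators `u`. -/
structure AMoDState (N V : Type) where
  d : N → N → ℤ
  p : V → N → ℕ → ℤ
  u : V → N → ℤ

/-- A control of the AMoD system: customer-carrying trips `v`, rebalancing trips `w`. -/
structure AMoDControl (N V : Type) where
  v : V → N → N → ℤ
  w : V → N → N → ℤ

variable {N V : Type} [Fintype N] [DecidableEq N] [Fintype V]

/-- `Tmax i = (max_{j ≠ i} t j i) - 1`. -/
def Tmax (t : N → N → ℕ) (i : N) : ℕ :=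
  ((Finset.univ : Finset N).erase i).sup (fun j => t j i) - 1

/-- `tmax = max_{i ≠ j} t i j`. -/
def tmax (t : N → N → ℕ) : ℕ :=
  ((Finset.univ : Finset N).offDiag).sup (fun p => t p.1 p.2)

/-- `Σ_{i ∈ N} Σ_{T = 0}^{Tmax i} p k i T`. -/
def pSum (t : N → N → ℕ) (x : AMoDState N V) (k : V) : ℤ :=
  ∑ i : N, ∑ T ∈ Finset.range (Tmax t i + 1), x.p k i T

/-- Validity of a state: `d` nonnegative and zero on the diagonal,
`p` and `u` binary (and `p` vanishing out of range). -/
structure IsState (t : N → N → ℕ) (x : AMoDState N V) : Prop where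
  d_nonneg : ∀ i j, 0 ≤ x.d i j
  d_diag : ∀ i, x.d i i = 0
  p_bin : ∀ k i T, T ≤ Tmax t i → x.p k i T = 0 ∨ x.p k i T = 1
  p_oob : ∀ k i T, Tmax t i < T → x.p k i T = 0
  u_bin : ∀ k i, x.u k i = 0 ∨ x.u k i = 1

/-- Feasibility of a state: validity, constraint (P), and constraint (UP). -/
structure FeasState (t : N → N → ℕ) (x : AMoDState N V) : Prop where
  isState : IsState t x
  constrP : ∀ k, pSum t x k ≤ 1
  constrUP : ∀ k, (∑ i : N, x.u k i) + pSum t x k = 1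

/-- Validity of a control: binary values, zero diagonal. -/
structure IsControl (uc : AMoDControl N V) : Prop where
  v_bin : ∀ k i j, uc.v k i j = 0 ∨ uc.v k i j = 1
  w_bin : ∀ k i j, uc.w k i j = 0 ∨ uc.w k i j = 1
  v_diag : ∀ k i, uc.v k i i = 0
  w_diag : ∀ k i, uc.w k i i = 0

/-- Arrivals: nonnegative integers, zero on the diagonal. -/
def IsArrivals (c : N → N → ℤ) : Prop :=
  (∀ i j, 0 ≤ c i j) ∧ (∀ i, c i i = 0)

/-- Feasibility of a control at `(x, c)`: validity together with
constraints (A) and (B). -/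
structure FeasControl (t : N → N → ℕ) (x : AMoDState N V) (c : N → N → ℤ)
    (uc : AMoDControl N V) : Prop where
  isControl : IsControl uc
  constrA : ∀ k i, (∑ j : N, (uc.v k i j + uc.w k i j)) ≤ x.u k i + x.p k i 0
  constrB : ∀ i j, (∑ k : V, uc.v k i j) ≤ x.d i j + c i j

/-- The successor state `x⁺` of `x` under control `(v, w)` with arrivals `c`. -/
def succState (t : N → N → ℕ) (x : AMoDState N V) (c : N → N → ℤ)
    (uc : AMoDControl N V) : AMoDState N V where
  d := fun i j => x.d i j + c i j - ∑ k : V, uc.v k i j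
  p := fun k i T =>
    if T < Tmax t i then
      x.p k i (T + 1) +
        ∑ j ∈ Finset.univ.filter (fun j => t j i = T + 1), (uc.v k j i + uc.w k j i)
    else if T = Tmax t i then
      ∑ j ∈ Finset.univ.filter (fun j => t j i = Tmax t i + 1), (uc.v k j i + uc.w k j i)
    else 0
  u := fun k i => x.u k i + x.p k i 0 - ∑ j : N, (uc.v k i j + uc.w k i j)

/-- A feasible trajectory of the undisturbed system (`c ≡ 0`) from `x` over `n` steps. -/
def FeasTraj (t : N → N → ℕ) (x : AMoDState N V) (n : ℕ)
    (xs : ℕ → AMoDState N V) (cs : ℕ → AMoDControl N V) : Prop :=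
  xs 0 = x ∧ ∀ τ < n, FeasControl t (xs τ) (fun _ _ => 0) (cs τ) ∧
    xs (τ + 1) = succState t (xs τ) (fun _ _ => 0) (cs τ)

/-- The primary cost: total number of waiting customers. -/
def Jx (x : AMoDState N V) : ℤ := ∑ i : N, ∑ j : N, x.d i j

/-- The secondary cost: total rebalancing travel time. -/
def Ju (t : N → N → ℕ) (uc : AMoDControl N V) : ℤ :=
  ∑ k : V, ∑ i : N, ∑ j : N, (t i j : ℤ) * uc.w k i j

/-- The MPC cost of a plan over the horizon `thor`. -/
def planCost (t : N → N → ℕ) (ρ1 : ℝ) (thor : ℕ)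
    (xs : ℕ → AMoDState N V) (cs : ℕ → AMoDControl N V) : ℝ :=
  ∑ τ ∈ Finset.range thor, ((Jx (xs (τ + 1)) : ℝ) + ρ1 * (Ju t (cs τ) : ℝ))

/-- An MPC-optimal plan at a feasible state `x`. -/
def MPCOptimal (t : N → N → ℕ) (ρ1 : ℝ) (thor : ℕ) (x : AMoDState N V)
    (xs : ℕ → AMoDState N V) (cs : ℕ → AMoDControl N V) : Prop :=
  FeasTraj t x thor xs cs ∧
    ∀ ys ds, FeasTraj t x thor ys ds →
      planCost t ρ1 thor xs cs ≤ planCost t ρ1 thor ys ds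

/-- An (infinite) MPC trajectory of the undisturbed system: a feasible trajectory in
which every applied control is the first control of some MPC-optimal plan. -/
def MPCTraj (t : N → N → ℕ) (ρ1 : ℝ) (thor : ℕ)
    (xs : ℕ → AMoDState N V) (cs : ℕ → AMoDControl N V) : Prop :=
  (∀ τ, FeasControl t (xs τ) (fun _ _ => 0) (cs τ) ∧
      xs (τ + 1) = succState t (xs τ) (fun _ _ => 0) (cs τ)) ∧
  (∀ τ, ∃ ys ds, MPCOptimal t ρ1 thor (xs τ) ys ds ∧ ds 0 = cs τ)

/-! ## Charging model -/

/-- An augmented state: a state together with the state of charge of each vehicle. -/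
structure AugState (N V : Type) where
  x : AMoDState N V
  q : V → ℝ

variable {N V : Type} [Fintype N] [DecidableEq N] [Fintype V]

/-- Feasibility of an augmented state. -/
structure FeasAugState (t : N → N → ℕ) (αd : ℝ) (s : AugState N V) : Prop where
  feasState : FeasState t s.x
  q_nonneg : ∀ k, 0 ≤ s.q k
  q_le_one : ∀ k, s.q k ≤ 1
  q_range : ∀ k i T, s.x.p k i T = 1 → αd * (T : ℝ) ≤ s.q k

/-- The augmented successor of `(x, q)` under `(v, w)` with arrivals `c`. -/
def augSucc (t : N → N → ℕ) (αc αd : ℝ) (s : AugState N V) (c : N → N → ℤ)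
    (uc : AMoDControl N V) : AugState N V :=
  let x' := succState t s.x c uc
  { x := x'
    q := fun k =>
      min (s.q k + αc * ∑ i : N, ((x'.u k i : ℤ) : ℝ)) 1 -
        αd * ∑ i : N, ∑ T ∈ Finset.range (Tmax t i + 1), ((x'.p k i T : ℤ) : ℝ) }

/-- Feasibility of a control at an augmented state: feasibility at `(x, c)` plus the
charge constraints for departing trips. -/
structure FeasAugControl (t : N → N → ℕ) (αd : ℝ) (s : AugState N V) (c : N → N → ℤ)
    (uc : AMoDControl N V) : Prop where
  feasControl : FeasControl t s.x c uc
  charge_v : ∀ k i j, uc.v k i j = 1 → αd * (t i j : ℝ) ≤ s.q k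
  charge_w : ∀ k i j, uc.w k i j = 1 → αd * (t i j : ℝ) ≤ s.q k

/-- A feasible trajectory of the undisturbed augmented system from `s` over `n` steps. -/
def FeasAugTraj (t : N → N → ℕ) (αc αd : ℝ) (s : AugState N V) (n : ℕ)
    (ss : ℕ → AugState N V) (cs : ℕ → AMoDControl N V) : Prop :=
  ss 0 = s ∧ ∀ τ < n, FeasAugControl t αd (ss τ) (fun _ _ => 0) (cs τ) ∧
    ss (τ + 1) = augSucc t αc αd (ss τ) (fun _ _ => 0) (cs τ)

/-- The MPC cost of a plan with charging over the horizon `thor`. -/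
def augPlanCost (t : N → N → ℕ) (ρ1 ρ2 ρc : ℝ) (thor : ℕ)
    (ss : ℕ → AugState N V) (cs : ℕ → AMoDControl N V) : ℝ :=
  (∑ τ ∈ Finset.range thor,
      ((Jx (ss (τ + 1)).x : ℝ) + ρ1 * (Ju t (cs τ) : ℝ) - ρ2 * ∑ k : V, (ss (τ + 1)).q k)) -
    ρc * ∑ k : V, (ss thor).q k

/-- An MPC-optimal plan at a feasible augmented state `s`. -/
def AugMPCOptimal (t : N → N → ℕ) (αc αd ρ1 ρ2 ρc : ℝ) (thor : ℕ) (s : AugState N V)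
    (ss : ℕ → AugState N V) (cs : ℕ → AMoDControl N V) : Prop :=
  FeasAugTraj t αc αd s thor ss cs ∧
    ∀ ys ds, FeasAugTraj t αc αd s thor ys ds →
      augPlanCost t ρ1 ρ2 ρc thor ss cs ≤ augPlanCost t ρ1 ρ2 ρc thor ys ds

/-- An (infinite) MPC trajectory of the undisturbed augmented system. -/
def AugMPCTraj (t : N → N → ℕ) (αc αd ρ1 ρ2 ρc : ℝ) (thor : ℕ)
    (ss : ℕ → AugState N V) (cs : ℕ → AMoDControl N V) : Prop :=
  (∀ τ, FeasAugControl t αd (ss τ) (fun _ _ => 0) (cs τ) ∧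
      ss (τ + 1) = augSucc t αc αd (ss τ) (fun _ _ => 0) (cs τ)) ∧
  (∀ τ, ∃ ys ds, AugMPCOptimal t αc αd ρ1 ρ2 ρc thor (ss τ) ys ds ∧ ds 0 = cs τ)

/-!
Feasibility, charge constraints included, is invariant under feasible controls, and the number
`Jx` of waiting customers never increases. Whenever a customer waits, a plan of length `t_hor`
serves one: any vehicle becomes available within `tmax` steps, charges for
`⌈(α_d/α_c)·tmax⌉` steps, rebalances to the customer's station, charges again and departs with
the customer. Comparing the cost of this plan with a lower bound valid for every plan shows that,
for small weights, every optimal plan ends with fewer waiting customers than it started with.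
The tail of the optimal plan, extended by an idle step, is a plan at the next closed-loop state;
hence the optimal cost plus `Jx` drops by at least `1/2` per step while customers wait. As it is
bounded below, customers cannot wait forever.
-/

open Finset

section TravelTimes

variable {t : N → N → ℕ}

omit [DecidableEq N] in
lemma t_le_tmax {i j : N} (hij : i ≠ j) : t i j ≤ tmax t :=
  Finset.le_sup (f := fun p : N × N => t p.1 p.2) (b := (i, j))
    (mem_offDiag.mpr ⟨mem_univ _, mem_univ _, hij⟩)

lemma t_le_Tmax_add_one {i j : N} (hji : j ≠ i) : t j i ≤ Tmax t i + 1 := by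
  have := Finset.le_sup (f := fun j => t j i) (mem_erase.mpr ⟨hji, mem_univ j⟩)
  unfold Tmax; omega

lemma Tmax_add_one_le_tmax [Nontrivial N] (ht : ∀ i j : N, i ≠ j → 1 ≤ t i j) (i : N) :
    Tmax t i + 1 ≤ tmax t := by
  obtain ⟨j, hj⟩ := exists_ne i
  have h₁ : 1 ≤ ((univ : Finset N).erase i).sup (fun j => t j i) :=
    (ht j i hj).trans (Finset.le_sup (f := fun j => t j i) (mem_erase.mpr ⟨hj, mem_univ j⟩))
  have h₂ : ((univ : Finset N).erase i).sup (fun j => t j i) ≤ tmax t :=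
    Finset.sup_le fun j hj => t_le_tmax (ne_of_mem_erase hj)
  unfold Tmax; omega

end TravelTimes

section State

omit [Fintype V]

variable {t : N → N → ℕ} {x : AMoDState N V}

lemma IsState.p_eq_zero_or_one (hx : IsState t x) (k : V) (i : N) (T : ℕ) :
    x.p k i T = 0 ∨ x.p k i T = 1 := by
  rcases le_or_gt T (Tmax t i) with hT | hT
  · exact hx.p_bin k i T hT
  · exact Or.inl (hx.p_oob k i T hT)

lemma IsState.p_nonneg (hx : IsState t x) (k : V) (i : N) (T : ℕ) : 0 ≤ x.p k i T := by
  rcases hx.p_eq_zero_or_one k i T with h | h <;> omega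

lemma IsState.u_nonneg (hx : IsState t x) (k : V) (i : N) : 0 ≤ x.u k i := by
  rcases hx.u_bin k i with h | h <;> omega

lemma IsState.u_le_sum (hx : IsState t x) (k : V) (i : N) : x.u k i ≤ ∑ i : N, x.u k i :=
  single_le_sum (fun i _ => hx.u_nonneg k i) (mem_univ i)

lemma p_le_pSum_of_nonneg {k : V} (hp : ∀ i T, 0 ≤ x.p k i T) {i : N} {T : ℕ}
    (hT : T ≤ Tmax t i) : x.p k i T ≤ pSum t x k :=
  (single_le_sum (fun T _ => hp i T) (mem_range.mpr (Nat.lt_succ_of_le hT))).trans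
    (single_le_sum (f := fun i => ∑ T ∈ range (Tmax t i + 1), x.p k i T)
      (fun i _ => sum_nonneg fun T _ => hp i T) (mem_univ i))

lemma IsState.pSum_nonneg (hx : IsState t x) (k : V) : 0 ≤ pSum t x k :=
  sum_nonneg fun i _ => sum_nonneg fun T _ => hx.p_nonneg k i T

lemma IsState.p_le_pSum (hx : IsState t x) (k : V) (i : N) (T : ℕ) :
    x.p k i T ≤ pSum t x k := by
  rcases le_or_gt T (Tmax t i) with hT | hT
  · exact p_le_pSum_of_nonneg (hx.p_nonneg k) hT
  · rw [hx.p_oob k i T hT]; exact hx.pSum_nonneg k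

lemma IsState.sum_p_zero_le_pSum (hx : IsState t x) (k : V) :
    ∑ i : N, x.p k i 0 ≤ pSum t x k :=
  sum_le_sum fun i _ =>
    single_le_sum (f := fun T => x.p k i T) (fun T _ => hx.p_nonneg k i T) (by simp)

lemma IsState.exists_p_eq_one (hx : IsState t x) {k : V} (h : pSum t x k ≠ 0) :
    ∃ i T, x.p k i T = 1 := by
  obtain ⟨i, -, hi⟩ := exists_ne_zero_of_sum_ne_zero h
  obtain ⟨T, -, hT⟩ := exists_ne_zero_of_sum_ne_zero hi
  exact ⟨i, T, (hx.p_eq_zero_or_one k i T).resolve_left hT⟩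

omit [DecidableEq N] in
lemma Jx_eq_of_d_eq {y : AMoDState N V} (h : x.d = y.d) : Jx x = Jx y := by
  simp only [Jx, h]

lemma IsState.Jx_nonneg (hx : IsState t x) : 0 ≤ Jx x :=
  sum_nonneg fun i _ => sum_nonneg fun j _ => hx.d_nonneg i j

omit [Fintype N] [DecidableEq N] in
lemma IsControl.v_add_w_nonneg {uc : AMoDControl N V} (hu : IsControl uc) (k : V) (i j : N) :
    0 ≤ uc.v k i j + uc.w k i j := by
  rcases hu.v_bin k i j with h | h <;> rcases hu.w_bin k i j with h' | h' <;> omega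

end State

section Successor

variable {t : N → N → ℕ} {x : AMoDState N V} {c : N → N → ℤ} {uc : AMoDControl N V}

def departures (uc : AMoDControl N V) (k : V) : ℤ :=
  ∑ i : N, ∑ j : N, (uc.v k i j + uc.w k i j)

lemma succState_p (hx : IsState t x) (k : V) (i : N) {T : ℕ} (hT : T ≤ Tmax t i) :
    (succState t x c uc).p k i T = x.p k i (T + 1) +
      ∑ j ∈ univ.filter (fun j => t j i = T + 1), (uc.v k j i + uc.w k j i) := by
  simp only [succState]
  rcases hT.lt_or_eq with h | rfl
  · rw [if_pos h]
  · rw [if_neg (lt_irrefl _), if_pos rfl, hx.p_oob k i _ (Nat.lt_succ_self _), zero_add]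

lemma succState_p_of_Tmax_lt {k : V} {i : N} {T : ℕ} (hT : Tmax t i < T) :
    (succState t x c uc).p k i T = 0 := by
  simp only [succState]
  rw [if_neg (by omega), if_neg (by omega)]

lemma sum_u_succState (k : V) :
    ∑ i : N, (succState t x c uc).u k i
      = ∑ i : N, x.u k i + ∑ i : N, x.p k i 0 - departures uc k := by
  simp only [succState, departures, sum_sub_distrib, sum_add_distrib]

lemma sum_range_sum_filter_travel (ht : ∀ i j : N, i ≠ j → 1 ≤ t i j) (i : N) (f : N → ℤ)
    (hf : f i = 0) :
    ∑ T ∈ range (Tmax t i + 1), ∑ j ∈ univ.filter (fun j => t j i = T + 1), f j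
      = ∑ j : N, f j := by
  simp only [sum_filter]
  rw [sum_comm]
  refine sum_congr rfl fun j _ => ?_
  by_cases hj : j = i
  · subst hj; simp [hf]
  · have h₁ := ht j i hj
    have h₂ := t_le_Tmax_add_one (t := t) hj
    rw [sum_eq_single_of_mem (t j i - 1) (mem_range.mpr (by omega)), if_pos (by omega)]
    intro T _ hT
    rw [if_neg (by omega)]

lemma pSum_succState (ht : ∀ i j : N, i ≠ j → 1 ≤ t i j) (hx : IsState t x)
    (hu : IsControl uc) (k : V) :
    pSum t (succState t x c uc) k = pSum t x k - ∑ i : N, x.p k i 0 + departures uc k := by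
  have hshift : ∀ i, ∑ T ∈ range (Tmax t i + 1), x.p k i (T + 1)
      = ∑ T ∈ range (Tmax t i + 1), x.p k i T - x.p k i 0 := by
    intro i
    have := sum_range_succ' (fun T => x.p k i T) (Tmax t i + 1)
    rw [sum_range_succ, hx.p_oob k i _ (Nat.lt_succ_self _)] at this
    linarith
  have hrow : ∀ i, ∑ T ∈ range (Tmax t i + 1), (succState t x c uc).p k i T
      = ∑ T ∈ range (Tmax t i + 1), x.p k i T - x.p k i 0
        + ∑ j : N, (uc.v k j i + uc.w k j i) := by
    intro i
    rw [sum_congr rfl fun T hT => succState_p hx k i (Nat.lt_succ_iff.mp (mem_range.mp hT)),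
      sum_add_distrib, hshift,
      sum_range_sum_filter_travel ht i _ (by simp [hu.v_diag, hu.w_diag])]
  simp only [pSum, hrow, sum_add_distrib, sum_sub_distrib, departures]
  rw [sum_comm (f := fun i j => uc.v k j i), sum_comm (f := fun i j => uc.w k j i)]

lemma feasState_succState (ht : ∀ i j : N, i ≠ j → 1 ≤ t i j) (hx : FeasState t x)
    (hc : IsArrivals c) (hu : FeasControl t x c uc) : FeasState t (succState t x c uc) := by
  have hxs := hx.isState
  have hctl := hu.isControl
  set x' := succState t x c uc
  have hp_nonneg : ∀ k i T, 0 ≤ x'.p k i T := by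
    intro k i T
    rcases le_or_gt T (Tmax t i) with hT | hT
    · rw [succState_p hxs k i hT]
      exact add_nonneg (hxs.p_nonneg k i _) (sum_nonneg fun j _ => hctl.v_add_w_nonneg k j i)
    · rw [succState_p_of_Tmax_lt hT]
  have hu_nonneg : ∀ k i, 0 ≤ x'.u k i := fun k i => by
    have := hu.constrA k i
    simp only [x', succState]; omega
  have hUP : ∀ k, ∑ i : N, x'.u k i + pSum t x' k = 1 := fun k => by
    rw [sum_u_succState, pSum_succState ht hxs hctl]; linarith [hx.constrUP k]
  have hpSum_nonneg : ∀ k, 0 ≤ pSum t x' k :=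
    fun k => sum_nonneg fun i _ => sum_nonneg fun T _ => hp_nonneg k i T
  have hsum_u_nonneg : ∀ k, 0 ≤ ∑ i : N, x'.u k i :=
    fun k => sum_nonneg fun i _ => hu_nonneg k i
  refine ⟨⟨fun i j => ?_, fun i => ?_, fun k i T hT => ?_, fun k i T hT => ?_, fun k i => ?_⟩,
    fun k => ?_, hUP⟩
  · have := hu.constrB i j
    simp only [x', succState]; linarith
  · simp [x', succState, hxs.d_diag, hc.2, hctl.v_diag]
  · have := p_le_pSum_of_nonneg (hp_nonneg k) hT
    have := hp_nonneg k i T; have := hUP k; have := hsum_u_nonneg k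
    omega
  · exact succState_p_of_Tmax_lt hT
  · have := single_le_sum (fun i _ => hu_nonneg k i) (mem_univ i)
    have := hu_nonneg k i; have := hUP k; have := hpSum_nonneg k
    omega
  · linarith [hUP k, hsum_u_nonneg k]

end Successor

section Charge

variable {t : N → N → ℕ} {αc αd : ℝ} {s : AugState N V} {c : N → N → ℤ}
  {uc : AMoDControl N V}

lemma augSucc_q (k : V) :
    (augSucc t αc αd s c uc).q k
      = min (s.q k + αc * ((∑ i : N, (succState t s.x c uc).u k i : ℤ) : ℝ)) 1
        - αd * ((pSum t (succState t s.x c uc) k : ℤ) : ℝ) := by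
  simp [augSucc, pSum]

lemma augSucc_d_le (hu : IsControl uc) (i j : N) :
    (augSucc t αc αd s (fun _ _ => 0) uc).x.d i j ≤ s.x.d i j := by
  have : 0 ≤ ∑ k : V, uc.v k i j :=
    sum_nonneg fun k _ => by rcases hu.v_bin k i j with h | h <;> omega
  simp only [augSucc, succState]; omega

lemma Jx_augSucc_le (hu : IsControl uc) :
    Jx (augSucc t αc αd s (fun _ _ => 0) uc).x ≤ Jx s.x :=
  sum_le_sum fun i _ => sum_le_sum fun j _ => augSucc_d_le hu i j

omit [DecidableEq N] in
lemma FeasAugControl.le_q (hu : FeasAugControl t αd s c uc) {k : V} {i j : N}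
    (h : uc.v k i j + uc.w k i j ≠ 0) : αd * t i j ≤ s.q k := by
  rcases hu.feasControl.isControl.v_bin k i j with hv | hv
  · rcases hu.feasControl.isControl.w_bin k i j with hw | hw
    · omega
    · exact hu.charge_w k i j hw
  · exact hu.charge_v k i j hv

/-- A vehicle that arrives in `T` steps after the transition was either already travelling or
has just departed on a trip of length `T + 1`; either way its charge covered `T + 1` steps. -/
lemma FeasAugControl.le_q_of_succState_p_eq_one (hs : FeasAugState t αd s)
    (hu : FeasAugControl t αd s c uc) {k : V} {i : N} {T : ℕ}
    (h : (succState t s.x c uc).p k i T = 1) : αd * (T + 1) ≤ s.q k := by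
  have hxs := hs.feasState.isState
  have hT : T ≤ Tmax t i := by
    by_contra hT
    rw [succState_p_of_Tmax_lt (not_le.mp hT)] at h
    exact zero_ne_one h
  rw [succState_p hxs k i hT] at h
  rcases hxs.p_eq_zero_or_one k i (T + 1) with h0 | h1
  · rw [h0, zero_add] at h
    obtain ⟨j, hj, hne⟩ := exists_ne_zero_of_sum_ne_zero (h ▸ one_ne_zero)
    have htj : t j i = T + 1 := (mem_filter.mp hj).2
    have := hu.le_q hne
    rwa [htj, Nat.cast_succ] at this
  · simpa using hs.q_range k i (T + 1) h1

lemma feasAugState_augSucc (ht : ∀ i j : N, i ≠ j → 1 ≤ t i j) (hαc : 0 ≤ αc) (hαd : 0 ≤ αd)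
    (hs : FeasAugState t αd s) (hc : IsArrivals c) (hu : FeasAugControl t αd s c uc) :
    FeasAugState t αd (augSucc t αc αd s c uc) := by
  have hx' := feasState_succState ht hs.feasState hc hu.feasControl
  have hxs' := hx'.isState
  suffices ∀ k, 0 ≤ (augSucc t αc αd s c uc).q k ∧ (augSucc t αc αd s c uc).q k ≤ 1 ∧
      ∀ i T, (succState t s.x c uc).p k i T = 1 →
        αd * T ≤ (augSucc t αc αd s c uc).q k from
    ⟨hx', fun k => (this k).1, fun k => (this k).2.1, fun k => (this k).2.2⟩
  intro k
  have hq₀ := hs.q_nonneg k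
  have hq₁ := hs.q_le_one k
  have hUP := hx'.constrUP k
  have hP₀ := hxs'.pSum_nonneg k
  rw [augSucc_q]
  rcases (show pSum t (succState t s.x c uc) k = 0 ∨ pSum t (succState t s.x c uc) k = 1 by
    have := hx'.constrP k; omega) with hP | hP
  · rw [show ∑ i : N, (succState t s.x c uc).u k i = 1 by omega, hP]
    refine ⟨by simp; positivity, by simp, fun i T hp => ?_⟩
    have := hxs'.p_le_pSum k i T
    omega
  · rw [show ∑ i : N, (succState t s.x c uc).u k i = 0 by omega, hP, min_eq_left (by simpa)]
    have hcharged : ∀ i T, (succState t s.x c uc).p k i T = 1 → αd * (T + 1) ≤ s.q k :=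
      fun i T hp => hu.le_q_of_succState_p_eq_one hs hp
    obtain ⟨i, T, hp⟩ := hxs'.exists_p_eq_one (k := k) (by omega)
    have := hcharged i T hp
    refine ⟨by push_cast; nlinarith [(T.cast_nonneg : (0 : ℝ) ≤ T)], by push_cast; linarith,
      fun i T hp => ?_⟩
    have := hcharged i T hp
    push_cast; linarith

end Charge

def AMoDControl.idle {N V : Type} : AMoDControl N V := ⟨fun _ _ _ => 0, fun _ _ _ => 0⟩

lemma isArrivals_zero {N : Type} : IsArrivals (fun _ _ => 0 : N → N → ℤ) :=
  ⟨fun _ _ => le_rfl, fun _ => rfl⟩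

/-- By constraint (A), vehicle `k` may depart from station `i`. -/
def Available {N V : Type} (x : AMoDState N V) (k : V) (i : N) : Prop := 1 ≤ x.u k i + x.p k i 0

section Idle

variable {t : N → N → ℕ} {αc αd : ℝ} {s : AugState N V}

def idleStep (t : N → N → ℕ) (αc αd : ℝ) (s : AugState N V) : AugState N V :=
  augSucc t αc αd s (fun _ _ => 0) AMoDControl.idle

omit [DecidableEq N] in
lemma Ju_idle : Ju t (AMoDControl.idle : AMoDControl N V) = 0 := by
  simp [Ju, AMoDControl.idle]

lemma feasAugControl_idle (hs : FeasAugState t αd s) :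
    FeasAugControl t αd s (fun _ _ => 0) AMoDControl.idle := by
  have hxs := hs.feasState.isState
  refine ⟨⟨⟨fun _ _ _ => Or.inl rfl, fun _ _ _ => Or.inl rfl, fun _ _ => rfl, fun _ _ => rfl⟩,
    fun k i => ?_, fun i j => ?_⟩, fun _ _ _ h => ?_, fun _ _ _ h => ?_⟩
  · simpa [AMoDControl.idle] using add_nonneg (hxs.u_nonneg k i) (hxs.p_nonneg k i 0)
  · simpa [AMoDControl.idle] using hxs.d_nonneg i j
  all_goals simp [AMoDControl.idle] at h

lemma feasAugState_idleStep (ht : ∀ i j : N, i ≠ j → 1 ≤ t i j) (hαc : 0 ≤ αc) (hαd : 0 ≤ αd)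
    (hs : FeasAugState t αd s) : FeasAugState t αd (idleStep t αc αd s) :=
  feasAugState_augSucc ht hαc hαd hs isArrivals_zero (feasAugControl_idle hs)

lemma feasAugState_iterate_idleStep (ht : ∀ i j : N, i ≠ j → 1 ≤ t i j) (hαc : 0 ≤ αc)
    (hαd : 0 ≤ αd) (hs : FeasAugState t αd s) (m : ℕ) :
    FeasAugState t αd ((idleStep t αc αd)^[m] s) := by
  induction m with
  | zero => exact hs
  | succ m ih => rw [Function.iterate_succ_apply']; exact feasAugState_idleStep ht hαc hαd ih

lemma idleStep_d : (idleStep t αc αd s).x.d = s.x.d := by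
  funext i j; simp [idleStep, augSucc, succState, AMoDControl.idle]

lemma iterate_idleStep_d (m : ℕ) : ((idleStep t αc αd)^[m] s).x.d = s.x.d := by
  induction m with
  | zero => rfl
  | succ m ih => rw [Function.iterate_succ_apply', idleStep_d, ih]

lemma idleStep_p (hs : FeasAugState t αd s) {k : V} {i : N} {T : ℕ}
    (h : s.x.p k i (T + 1) = 1) : (idleStep t αc αd s).x.p k i T = 1 := by
  have hT : T + 1 ≤ Tmax t i := by
    by_contra hT
    rw [hs.feasState.isState.p_oob k i _ (not_le.mp hT)] at h
    exact zero_ne_one h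
  simp only [idleStep, augSucc]
  rw [succState_p hs.feasState.isState k i (by omega), h]
  simp [AMoDControl.idle]

lemma iterate_idleStep_p (ht : ∀ i j : N, i ≠ j → 1 ≤ t i j) (hαc : 0 ≤ αc) (hαd : 0 ≤ αd)
    {k : V} {i : N} (T : ℕ) (hs : FeasAugState t αd s) (h : s.x.p k i T = 1) :
    ((idleStep t αc αd)^[T] s).x.p k i 0 = 1 := by
  induction T generalizing s with
  | zero => exact h
  | succ T ih =>
    rw [Function.iterate_succ_apply]
    exact ih (feasAugState_idleStep ht hαc hαd hs) (idleStep_p hs h)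

lemma idleStep_of_available (ht : ∀ i j : N, i ≠ j → 1 ≤ t i j) (hs : FeasAugState t αd s)
    {k : V} {i : N} (hav : Available s.x k i) :
    Available (idleStep t αc αd s).x k i ∧ (idleStep t αc αd s).q k = min (s.q k + αc) 1 := by
  have hxs := hs.feasState.isState
  have hdep : departures (AMoDControl.idle : AMoDControl N V) k = 0 := by
    simp [departures, AMoDControl.idle]
  have hP := pSum_succState (c := fun _ _ => 0) ht hxs
    (feasAugControl_idle hs).feasControl.isControl k
  have hU := sum_u_succState (t := t) (x := s.x) (c := fun _ _ => 0) (uc := AMoDControl.idle) k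
  have hUP := hs.feasState.constrUP k
  have hui := hxs.u_le_sum k i
  have hpi : s.x.p k i 0 ≤ ∑ i : N, s.x.p k i 0 :=
    single_le_sum (f := fun i => s.x.p k i 0) (fun i _ => hxs.p_nonneg k i 0) (mem_univ i)
  have hp0 := hxs.sum_p_zero_le_pSum k
  rw [hdep] at hP hU
  unfold Available at hav ⊢
  constructor
  · simp only [idleStep, augSucc]
    rw [succState_p hxs k i (Nat.zero_le _)]
    simp only [succState, AMoDControl.idle, add_zero, sub_zero, sum_const_zero]
    linarith [hxs.p_nonneg k i 1]
  · rw [idleStep, augSucc_q, hP, hU,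
      show ∑ i, s.x.u k i + ∑ i, s.x.p k i 0 - 0 = 1 by omega,
      show pSum t s.x k - ∑ i, s.x.p k i 0 + 0 = 0 by omega]
    simp

lemma iterate_idleStep_of_available (ht : ∀ i j : N, i ≠ j → 1 ≤ t i j) (hαc : 0 ≤ αc)
    (hαd : 0 ≤ αd) (hs : FeasAugState t αd s) {k : V} {i : N} (h : Available s.x k i) (m : ℕ) :
    Available ((idleStep t αc αd)^[m] s).x k i ∧
      min (m * αc) 1 ≤ ((idleStep t αc αd)^[m] s).q k := by
  induction m with
  | zero => simpa [h] using hs.q_nonneg k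
  | succ m ih =>
    obtain ⟨hav', hq'⟩ :=
      idleStep_of_available ht (feasAugState_iterate_idleStep ht hαc hαd hs m) ih.1
    rw [Function.iterate_succ_apply', hq']
    refine ⟨hav', le_min ?_ (min_le_right _ _)⟩
    calc min (↑(m + 1) * αc) 1 ≤ min (m * αc + αc) (1 + αc) := by
          push_cast; exact min_le_min (by linarith) (by linarith)
      _ = min (m * αc) 1 + αc := min_add_add_right _ _ _
      _ ≤ _ := by linarith [ih.2]

end Idle

section Reach

variable {t : N → N → ℕ} {αc αd : ℝ}

/-- `Reach t αc αd s n s' c`: the undisturbed augmented system can be steered from `s` to `s'` by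
`n` feasible controls whose rebalancing costs `Ju` add up to `c`. -/
inductive Reach (t : N → N → ℕ) (αc αd : ℝ) : AugState N V → ℕ → AugState N V → ℤ → Prop
  | refl (s : AugState N V) : Reach t αc αd s 0 s 0
  | step {s s' : AugState N V} {n : ℕ} {c : ℤ} (uc : AMoDControl N V) :
      FeasAugControl t αd s (fun _ _ => 0) uc →
      Reach t αc αd (augSucc t αc αd s (fun _ _ => 0) uc) n s' c →
      Reach t αc αd s (n + 1) s' (Ju t uc + c)

lemma Reach.trans {s₁ s₂ s₃ : AugState N V} {n m : ℕ} {c d : ℤ} (h₁ : Reach t αc αd s₁ n s₂ c)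
    (h₂ : Reach t αc αd s₂ m s₃ d) : Reach t αc αd s₁ (n + m) s₃ (c + d) := by
  induction h₁ with
  | refl => simpa using h₂
  | @step _ _ n c uc hu _ ih =>
    rw [show n + 1 + m = n + m + 1 by omega, add_assoc (Ju t uc)]
    exact .step uc hu (ih h₂)

lemma Reach.single {s : AugState N V} {uc : AMoDControl N V}
    (hu : FeasAugControl t αd s (fun _ _ => 0) uc) :
    Reach t αc αd s 1 (augSucc t αc αd s (fun _ _ => 0) uc) (Ju t uc) := by
  simpa using Reach.step uc hu (.refl _)

lemma Reach.feasAugState (ht : ∀ i j : N, i ≠ j → 1 ≤ t i j) (hαc : 0 ≤ αc) (hαd : 0 ≤ αd)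
    {s s' : AugState N V} {n : ℕ} {c : ℤ} (h : Reach t αc αd s n s' c)
    (hs : FeasAugState t αd s) : FeasAugState t αd s' := by
  induction h with
  | refl => exact hs
  | step uc hu _ ih => exact ih (feasAugState_augSucc ht hαc hαd hs isArrivals_zero hu)

lemma reach_iterate_idleStep (ht : ∀ i j : N, i ≠ j → 1 ≤ t i j) (hαc : 0 ≤ αc) (hαd : 0 ≤ αd)
    {s : AugState N V} (hs : FeasAugState t αd s) (m : ℕ) :
    Reach t αc αd s m ((idleStep t αc αd)^[m] s) 0 := by
  induction m generalizing s with
  | zero => exact .refl s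
  | succ m ih =>
    rw [Function.iterate_succ_apply]
    have h := Reach.step _ (feasAugControl_idle hs) (ih (feasAugState_idleStep ht hαc hαd hs))
    rwa [Ju_idle, zero_add] at h

lemma Reach.exists_feasAugTraj {s s' : AugState N V} {n : ℕ} {c : ℤ}
    (h : Reach t αc αd s n s' c) :
    ∃ ys ds, FeasAugTraj t αc αd s n ys ds ∧ ys n = s' ∧ ∑ τ ∈ range n, Ju t (ds τ) = c := by
  induction h with
  | refl s => exact ⟨fun _ => s, fun _ => AMoDControl.idle, ⟨rfl, by simp⟩, rfl, by simp⟩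
  | @step s s' n c uc hu _ ih =>
    obtain ⟨ys, ds, ⟨hys0, hys⟩, hysn, hds⟩ := ih
    refine ⟨fun | 0 => s | τ + 1 => ys τ, fun | 0 => uc | τ + 1 => ds τ,
      ⟨rfl, fun τ hτ => ?_⟩, hysn, by rw [sum_range_succ', ← hds, add_comm]⟩
    rcases τ with _ | τ
    · exact ⟨hu, by simpa using hys0⟩
    · exact hys τ (by omega)

end Reach

section Trip

variable {t : N → N → ℕ} {αc αd : ℝ} {s : AugState N V}

open Classical in
noncomputable def tripIndicator (k : V) (i j : N) : V → N → N → ℤ :=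
  fun k' i' j' => if k' = k then if i' = i then if j' = j then 1 else 0 else 0 else 0

noncomputable def AMoDControl.trip (carry : Bool) (k : V) (i j : N) : AMoDControl N V where
  v := if carry then tripIndicator k i j else 0
  w := if carry then 0 else tripIndicator k i j

section Indicator

omit [Fintype N] [Fintype V]

lemma tripIndicator_self (k : V) (i j : N) : tripIndicator k i j k i j = 1 := by
  simp [tripIndicator]

lemma tripIndicator_eq_zero_or_one (k k' : V) (i j i' j' : N) :
    tripIndicator k i j k' i' j' = 0 ∨ tripIndicator k i j k' i' j' = 1 := by
  unfold tripIndicator; split_ifs <;> simp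

lemma eq_of_tripIndicator_ne_zero {k k' : V} {i j i' j' : N}
    (h : tripIndicator k i j k' i' j' ≠ 0) : k' = k ∧ i' = i ∧ j' = j := by
  unfold tripIndicator at h; split_ifs at h <;> simp_all

lemma trip_v_add_w (carry : Bool) (k k' : V) (i j i' j' : N) :
    (AMoDControl.trip carry k i j).v k' i' j' + (AMoDControl.trip carry k i j).w k' i' j'
      = tripIndicator k i j k' i' j' := by
  cases carry <;> simp [AMoDControl.trip]

lemma isControl_trip (carry : Bool) (k : V) {i j : N} (hij : i ≠ j) :
    IsControl (AMoDControl.trip carry k i j) := by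
  have hdiag : ∀ k' i', tripIndicator k i j k' i' i' = 0 := fun k' i' =>
    by_contra fun h => hij ((eq_of_tripIndicator_ne_zero h).2.1.symm.trans
      (eq_of_tripIndicator_ne_zero h).2.2)
  cases carry <;>
    exact ⟨by simp [AMoDControl.trip, tripIndicator_eq_zero_or_one],
      by simp [AMoDControl.trip, tripIndicator_eq_zero_or_one],
      by simp [AMoDControl.trip, hdiag], by simp [AMoDControl.trip, hdiag]⟩

end Indicator

omit [Fintype V] in
lemma sum_tripIndicator_dest (k k' : V) (i j i' : N) :
    ∑ j' : N, tripIndicator k i j k' i' j' = tripIndicator k i j k' i' j := by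
  classical
  simp [tripIndicator]

omit [Fintype N] in
lemma sum_tripIndicator_vehicle (k : V) (i j i' j' : N) :
    ∑ k' : V, tripIndicator k i j k' i' j' = tripIndicator k i j k i' j' := by
  classical
  simp [tripIndicator]

lemma feasAugControl_trip (hs : FeasAugState t αd s) {carry : Bool} {k : V} {i j : N}
    (hav : Available s.x k i) (hij : i ≠ j) (hq : αd * t i j ≤ s.q k)
    (hd : carry → 1 ≤ s.x.d i j) :
    FeasAugControl t αd s (fun _ _ => 0) (AMoDControl.trip carry k i j) := by
  have hxs := hs.feasState.isState
  have hcharge : ∀ k' i' j', tripIndicator k i j k' i' j' ≠ 0 → αd * t i' j' ≤ s.q k' := by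
    intro k' i' j' h
    obtain ⟨rfl, rfl, rfl⟩ := eq_of_tripIndicator_ne_zero h
    exact hq
  refine ⟨⟨isControl_trip carry k hij, fun k' i' => ?_, fun i' j' => ?_⟩,
    fun k' i' j' hv => hcharge k' i' j' ?_, fun k' i' j' hw => hcharge k' i' j' ?_⟩
  · simp only [trip_v_add_w, sum_tripIndicator_dest]
    rcases tripIndicator_eq_zero_or_one k k' i j i' j with h | h
    · rw [h]; exact add_nonneg (hxs.u_nonneg k' i') (hxs.p_nonneg k' i' 0)
    · obtain ⟨rfl, rfl, -⟩ := eq_of_tripIndicator_ne_zero (h ▸ one_ne_zero)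
      rw [h]; exact hav
  · have hd0 := hxs.d_nonneg i' j'
    cases carry
    · simpa [AMoDControl.trip] using hd0
    · simp only [AMoDControl.trip, if_true, sum_tripIndicator_vehicle, add_zero]
      rcases tripIndicator_eq_zero_or_one k k i j i' j' with h | h
      · rw [h]; exact hd0
      · obtain ⟨-, rfl, rfl⟩ := eq_of_tripIndicator_ne_zero (h ▸ one_ne_zero)
        rw [h]; exact hd rfl
  · cases carry <;> simp_all [AMoDControl.trip]
  · cases carry <;> simp_all [AMoDControl.trip]

lemma Ju_trip (carry : Bool) (k : V) (i j : N) :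
    Ju t (AMoDControl.trip carry k i j) = if carry then 0 else (t i j : ℤ) := by
  classical
  cases carry <;> simp [Ju, AMoDControl.trip, tripIndicator]

lemma augSucc_trip_false_d (k : V) (i j : N) :
    (augSucc t αc αd s (fun _ _ => 0) (AMoDControl.trip false k i j)).x.d = s.x.d := by
  funext i' j'
  simp [augSucc, succState, AMoDControl.trip]

lemma Jx_augSucc_trip_true (k : V) (i j : N) :
    Jx (augSucc t αc αd s (fun _ _ => 0) (AMoDControl.trip true k i j)).x = Jx s.x - 1 := by
  classical
  simp [Jx, augSucc, succState, AMoDControl.trip, tripIndicator, sum_sub_distrib]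

lemma augSucc_trip_p (ht : ∀ i j : N, i ≠ j → 1 ≤ t i j) (hαc : 0 ≤ αc) (hαd : 0 ≤ αd)
    (hs : FeasAugState t αd s) {carry : Bool} {k : V} {i j : N}
    (hu : FeasAugControl t αd s (fun _ _ => 0) (AMoDControl.trip carry k i j)) (hij : i ≠ j) :
    (augSucc t αc αd s (fun _ _ => 0) (AMoDControl.trip carry k i j)).x.p k j (t i j - 1) = 1 := by
  have hxs := hs.feasState.isState
  have hs' := feasAugState_augSucc ht hαc hαd hs isArrivals_zero hu
  have hT : t i j - 1 ≤ Tmax t j := by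
    have := t_le_Tmax_add_one (t := t) hij; omega
  have hge : 1 ≤ (augSucc t αc αd s (fun _ _ => 0) (AMoDControl.trip carry k i j)).x.p k j
      (t i j - 1) := by
    simp only [augSucc]
    rw [succState_p hxs k j hT]
    have hi : i ∈ univ.filter (fun i' => t i' j = t i j - 1 + 1) := by
      simp only [mem_filter, mem_univ, true_and]; have := ht i j hij; omega
    have := single_le_sum (fun i' _ => (isControl_trip carry k hij).v_add_w_nonneg k i' j) hi
    rw [trip_v_add_w, tripIndicator_self] at this
    linarith [hxs.p_nonneg k j (t i j - 1 + 1)]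
  have := hs'.feasState.isState.p_eq_zero_or_one k j (t i j - 1)
  omega

end Trip

section Serving

variable {t : N → N → ℕ} {αc αd : ℝ} {s : AugState N V}

/-- Charging for this many steps lets a vehicle cover any trip. -/
noncomputable def chargeTime (t : N → N → ℕ) (αc αd : ℝ) : ℕ := (⌈αd / αc * (tmax t : ℝ)⌉).toNat

omit [DecidableEq N] in
lemma le_chargeTime_mul (hαc : 0 < αc) : αd * tmax t ≤ chargeTime t αc αd * αc := by
  have h : αd / αc * tmax t ≤ (chargeTime t αc αd : ℝ) :=
    calc αd / αc * tmax t ≤ (⌈αd / αc * (tmax t : ℝ)⌉ : ℝ) := Int.le_ceil _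
      _ ≤ _ := by exact_mod_cast Int.self_le_toNat _
  calc αd * tmax t = αd / αc * tmax t * αc := by field_simp
    _ ≤ _ := mul_le_mul_of_nonneg_right h hαc.le

lemma exists_reach_available [Nontrivial N] (ht : ∀ i j : N, i ≠ j → 1 ≤ t i j) (hαc : 0 ≤ αc)
    (hαd : 0 ≤ αd) (hs : FeasAugState t αd s) (k : V) :
    ∃ n i s', n + 1 ≤ tmax t ∧ Reach t αc αd s n s' 0 ∧ s'.x.d = s.x.d ∧ Available s'.x k i := by
  have hxs := hs.feasState.isState
  by_cases hu : ∃ i, s.x.u k i = 1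
  · obtain ⟨i, hi⟩ := hu
    refine ⟨0, i, s, by have := Tmax_add_one_le_tmax ht i; omega, .refl s, rfl, ?_⟩
    unfold Available; linarith [hxs.p_nonneg k i 0]
  · simp only [not_exists] at hu
    have hU : ∑ i, s.x.u k i = 0 := sum_eq_zero fun i _ => (hxs.u_bin k i).resolve_right (hu i)
    obtain ⟨i, T, hp⟩ := hxs.exists_p_eq_one (k := k) (by have := hs.feasState.constrUP k; omega)
    have hT : T ≤ Tmax t i := by
      by_contra hT
      rw [hxs.p_oob k i T (not_le.mp hT)] at hp
      exact zero_ne_one hp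
    refine ⟨T, i, _, by have := Tmax_add_one_le_tmax ht i; omega,
      reach_iterate_idleStep ht hαc hαd hs T, iterate_idleStep_d T, ?_⟩
    unfold Available
    rw [iterate_idleStep_p ht hαc hαd T hs hp]
    linarith [(feasAugState_iterate_idleStep ht hαc hαd hs T).feasState.isState.u_nonneg k i]

lemma exists_reach_charged (ht : ∀ i j : N, i ≠ j → 1 ≤ t i j) (hαc : 0 < αc) (hαd : 0 ≤ αd)
    (hrange : αd * (tmax t : ℝ) ≤ 1) (hs : FeasAugState t αd s) {k : V} {i : N}
    (hav : Available s.x k i) :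
    ∃ s', Reach t αc αd s (chargeTime t αc αd) s' 0 ∧ s'.x.d = s.x.d ∧ Available s'.x k i ∧
      αd * tmax t ≤ s'.q k := by
  obtain ⟨hav', hq⟩ := iterate_idleStep_of_available ht hαc.le hαd hs hav (chargeTime t αc αd)
  exact ⟨_, reach_iterate_idleStep ht hαc.le hαd hs _, iterate_idleStep_d _, hav',
    (le_min (le_chargeTime_mul hαc) hrange).trans hq⟩

lemma exists_reach_relocated (ht : ∀ i j : N, i ≠ j → 1 ≤ t i j) (hαc : 0 < αc) (hαd : 0 ≤ αd)
    (hrange : αd * (tmax t : ℝ) ≤ 1) (hs : FeasAugState t αd s) {k : V} {i : N}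
    (hav : Available s.x k i) (hq : αd * tmax t ≤ s.q k) (j : N) :
    ∃ n s' c, n ≤ tmax t + chargeTime t αc αd ∧ Reach t αc αd s n s' c ∧ c ≤ tmax t ∧
      s'.x.d = s.x.d ∧ Available s'.x k j ∧ αd * tmax t ≤ s'.q k := by
  rcases eq_or_ne i j with rfl | hij
  · exact ⟨0, s, 0, Nat.zero_le _, .refl s, Int.natCast_nonneg _, rfl, hav, hq⟩
  have htij := t_le_tmax (t := t) hij
  have hu := feasAugControl_trip (carry := false) hs hav hij
    (le_trans (by gcongr) hq) (by simp)
  have hs₁ := feasAugState_augSucc ht hαc.le hαd hs isArrivals_zero hu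
  have hp₁ := augSucc_trip_p ht hαc.le hαd hs hu hij
  have hs₂ := feasAugState_iterate_idleStep ht hαc.le hαd hs₁ (t i j - 1)
  have hav₂ : Available ((idleStep t αc αd)^[t i j - 1]
      (augSucc t αc αd s (fun _ _ => 0) (AMoDControl.trip false k i j))).x k j := by
    unfold Available
    rw [iterate_idleStep_p ht hαc.le hαd _ hs₁ hp₁]
    linarith [hs₂.feasState.isState.u_nonneg k j]
  obtain ⟨s₃, r₃, hd₃, hav₃, hq₃⟩ := exists_reach_charged ht hαc hαd hrange hs₂ hav₂
  have r := (Reach.single (αc := αc) hu).trans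
    ((reach_iterate_idleStep ht hαc.le hαd hs₁ (t i j - 1)).trans r₃)
  rw [Ju_trip] at r
  refine ⟨_, s₃, _, ?_, r, by simpa using htij, ?_, hav₃, hq₃⟩
  · have := ht i j hij; omega
  · rw [hd₃, iterate_idleStep_d, augSucc_trip_false_d]

theorem exists_reach_served (ht : ∀ i j : N, i ≠ j → 1 ≤ t i j) (hαc : 0 < αc) (hαd : 0 ≤ αd)
    (hrange : αd * (tmax t : ℝ) ≤ 1) {thor : ℕ}
    (hthor : 2 * tmax t + 2 * chargeTime t αc αd ≤ thor) (hs : FeasAugState t αd s) (k : V)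
    {i j : N} (hij : i ≠ j) (hd : 1 ≤ s.x.d i j) :
    ∃ s' c, Reach t αc αd s thor s' c ∧ c ≤ tmax t ∧ Jx s'.x = Jx s.x - 1 := by
  have : Nontrivial N := ⟨⟨i, j, hij⟩⟩
  have feas {s s' : AugState N V} {n : ℕ} {c : ℤ} (r : Reach t αc αd s n s' c)
      (hs : FeasAugState t αd s) := r.feasAugState ht hαc.le hαd hs
  obtain ⟨n₁, i₁, s₁, hn₁, r₁, hd₁, hav₁⟩ := exists_reach_available ht hαc.le hαd hs k
  obtain ⟨s₂, r₂, hd₂, hav₂, hq₂⟩ := exists_reach_charged ht hαc hαd hrange (feas r₁ hs) hav₁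
  obtain ⟨n₃, s₃, c, hn₃, r₃, hc, hd₃, hav₃, hq₃⟩ :=
    exists_reach_relocated ht hαc hαd hrange (feas r₂ (feas r₁ hs)) hav₂ hq₂ i
  have hs₃ := feas r₃ (feas r₂ (feas r₁ hs))
  have hd₃' : s₃.x.d = s.x.d := by rw [hd₃, hd₂, hd₁]
  have hu := feasAugControl_trip (carry := true) hs₃ hav₃ hij
    (le_trans (by gcongr; exact_mod_cast t_le_tmax hij) hq₃) (fun _ => hd₃' ▸ hd)
  have r₄ := Reach.single (αc := αc) hu
  rw [Ju_trip, if_pos rfl] at r₄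
  have r₅ := reach_iterate_idleStep ht hαc.le hαd (feas r₄ hs₃)
    (thor - (n₁ + chargeTime t αc αd + n₃ + 1))
  have r := (((r₁.trans r₂).trans r₃).trans r₄).trans r₅
  rw [show n₁ + chargeTime t αc αd + n₃ + 1 + (thor - (n₁ + chargeTime t αc αd + n₃ + 1)) = thor
    by omega] at r
  refine ⟨_, _, r, by simpa using hc, ?_⟩
  rw [Jx_eq_of_d_eq (iterate_idleStep_d _), Jx_augSucc_trip_true, Jx_eq_of_d_eq hd₃']

end Serving

section Cost

variable {t : N → N → ℕ} {αc αd ρ1 ρ2 ρc : ℝ} {s : AugState N V} {n : ℕ}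
  {ys : ℕ → AugState N V} {ds : ℕ → AMoDControl N V}

lemma FeasAugTraj.feasAugState (ht : ∀ i j : N, i ≠ j → 1 ≤ t i j) (hαc : 0 ≤ αc)
    (hαd : 0 ≤ αd) (htr : FeasAugTraj t αc αd s n ys ds) (hs : FeasAugState t αd s) {m : ℕ}
    (hm : m ≤ n) : FeasAugState t αd (ys m) := by
  induction m with
  | zero => exact htr.1 ▸ hs
  | succ m ih =>
    rw [(htr.2 m hm).2]
    exact feasAugState_augSucc ht hαc hαd (ih (by omega)) isArrivals_zero (htr.2 m hm).1

lemma FeasAugTraj.Jx_le (htr : FeasAugTraj t αc αd s n ys ds) {m m' : ℕ} (hmm' : m ≤ m')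
    (hm' : m' ≤ n) : Jx (ys m').x ≤ Jx (ys m).x := by
  induction m', hmm' using Nat.le_induction with
  | base => exact le_rfl
  | succ m' _ ih =>
    rw [(htr.2 m' hm').2]
    exact (Jx_augSucc_le (htr.2 m' hm').1.feasControl.isControl).trans (ih (by omega))

omit [DecidableEq N] in
lemma Ju_nonneg {uc : AMoDControl N V} (hu : IsControl uc) : 0 ≤ Ju t uc :=
  sum_nonneg fun k _ => sum_nonneg fun i _ => sum_nonneg fun j _ =>
    mul_nonneg (Nat.cast_nonneg _) (by rcases hu.w_bin k i j with h | h <;> omega)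

lemma FeasAugState.sum_q_nonneg (hs : FeasAugState t αd s) : 0 ≤ ∑ k : V, s.q k :=
  sum_nonneg fun k _ => hs.q_nonneg k

lemma FeasAugState.sum_q_le_card (hs : FeasAugState t αd s) :
    ∑ k : V, s.q k ≤ Fintype.card V := by
  simpa using sum_le_sum fun k (_ : k ∈ univ) => hs.q_le_one k

lemma augPlanCost_le (ht : ∀ i j : N, i ≠ j → 1 ≤ t i j) (hαc : 0 ≤ αc) (hαd : 0 ≤ αd)
    (hρ2 : 0 ≤ ρ2) (hρc : 0 ≤ ρc) (hs : FeasAugState t αd s)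
    (htr : FeasAugTraj t αc αd s n ys ds) :
    augPlanCost t ρ1 ρ2 ρc n ys ds ≤
      ∑ τ ∈ range n, (Jx (ys (τ + 1)).x : ℝ) + ρ1 * ∑ τ ∈ range n, (Ju t (ds τ) : ℝ) := by
  have hfeas := fun m (hm : m ≤ n) => htr.feasAugState ht hαc hαd hs hm
  have hterm : ∀ τ ∈ range n,
      (Jx (ys (τ + 1)).x : ℝ) + ρ1 * Ju t (ds τ) - ρ2 * ∑ k, (ys (τ + 1)).q k
        ≤ (Jx (ys (τ + 1)).x : ℝ) + ρ1 * Ju t (ds τ) := fun τ hτ => by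
    have := mul_nonneg hρ2 (hfeas (τ + 1) (mem_range.mp hτ)).sum_q_nonneg
    linarith
  have hsum := sum_le_sum hterm
  rw [sum_add_distrib, ← mul_sum] at hsum
  have := mul_nonneg hρc (hfeas n le_rfl).sum_q_nonneg
  rw [augPlanCost]
  linarith

lemma le_augPlanCost (ht : ∀ i j : N, i ≠ j → 1 ≤ t i j) (hαc : 0 ≤ αc) (hαd : 0 ≤ αd)
    (hρ1 : 0 ≤ ρ1) (hρ2 : 0 ≤ ρ2) (hρc : 0 ≤ ρc) (hs : FeasAugState t αd s)
    (htr : FeasAugTraj t αc αd s n ys ds) :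
    ∑ τ ∈ range n, (Jx (ys (τ + 1)).x : ℝ) - (ρ2 * n + ρc) * Fintype.card V ≤
      augPlanCost t ρ1 ρ2 ρc n ys ds := by
  have hfeas := fun m (hm : m ≤ n) => htr.feasAugState ht hαc hαd hs hm
  have : ∀ τ ∈ range n, (Jx (ys (τ + 1)).x : ℝ) - ρ2 * Fintype.card V
      ≤ (Jx (ys (τ + 1)).x : ℝ) + ρ1 * Ju t (ds τ) - ρ2 * ∑ k, (ys (τ + 1)).q k := fun τ hτ => by
    have hτ := mem_range.mp hτ
    have : (0 : ℝ) ≤ Ju t (ds τ) := by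
      exact_mod_cast Ju_nonneg (htr.2 τ hτ).1.feasControl.isControl
    have := mul_nonneg hρ1 this
    have := mul_le_mul_of_nonneg_left (hfeas (τ + 1) hτ).sum_q_le_card hρ2
    linarith
  have hsum := sum_le_sum this
  rw [sum_sub_distrib, sum_const, card_range, nsmul_eq_mul] at hsum
  have := mul_le_mul_of_nonneg_left (hfeas n le_rfl).sum_q_le_card hρc
  rw [augPlanCost]
  linarith

end Cost

section Descent

variable {t : N → N → ℕ} {αc αd ρ1 ρ2 ρc : ℝ} {thor : ℕ} {s : AugState N V}
  {ys : ℕ → AugState N V} {ds : ℕ → AMoDControl N V}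

lemma exists_plan_augPlanCost_le (ht : ∀ i j : N, i ≠ j → 1 ≤ t i j) (hαc : 0 < αc)
    (hαd : 0 ≤ αd) (hrange : αd * (tmax t : ℝ) ≤ 1) (hρ1 : 0 ≤ ρ1) (hρ2 : 0 ≤ ρ2) (hρc : 0 ≤ ρc)
    (hthor : 2 * tmax t + 2 * chargeTime t αc αd ≤ thor) (hs : FeasAugState t αd s) (k : V)
    {i j : N} (hij : i ≠ j) (hd : 1 ≤ s.x.d i j) :
    ∃ ys ds, FeasAugTraj t αc αd s thor ys ds ∧
      augPlanCost t ρ1 ρ2 ρc thor ys ds ≤ thor * Jx s.x - 1 + ρ1 * tmax t := by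
  obtain ⟨s', c, r, hc, hJ⟩ := exists_reach_served ht hαc hαd hrange hthor hs k hij hd
  obtain ⟨ys, ds, htr, hys, hds⟩ := r.exists_feasAugTraj
  refine ⟨ys, ds, htr, (augPlanCost_le ht hαc.le hαd hρ2 hρc hs htr).trans ?_⟩
  obtain ⟨n, rfl⟩ : ∃ n, thor = n + 1 :=
    ⟨thor - 1, by have := t_le_tmax (t := t) hij; have := ht i j hij; omega⟩
  have hJx : ∀ τ ∈ range n, (Jx (ys (τ + 1)).x : ℝ) ≤ Jx s.x := fun τ hτ => by
    have := htr.Jx_le (Nat.zero_le (τ + 1)) (by have := mem_range.mp hτ; omega)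
    rw [htr.1] at this; exact_mod_cast this
  have hJu : ρ1 * ∑ τ ∈ range (n + 1), (Ju t (ds τ) : ℝ) ≤ ρ1 * tmax t := by
    rw [← Int.cast_sum, hds]; gcongr; exact_mod_cast hc
  rw [sum_range_succ, hys, hJ]
  have := sum_le_sum hJx
  rw [sum_const, card_range, nsmul_eq_mul] at this
  push_cast at this ⊢
  linarith

lemma AugMPCOptimal.Jx_le_sub_one [Nonempty V] (ht : ∀ i j : N, i ≠ j → 1 ≤ t i j)
    (hαc : 0 < αc) (hαd : 0 ≤ αd) (hrange : αd * (tmax t : ℝ) ≤ 1) (hρ1 : 0 ≤ ρ1)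
    (hρ2 : 0 ≤ ρ2) (hρc : 0 ≤ ρc) (hthor : 2 * tmax t + 2 * chargeTime t αc αd ≤ thor)
    (hsmall : ρ1 * tmax t + (ρ2 * thor + ρc) * Fintype.card V < 1) (hs : FeasAugState t αd s)
    (hopt : AugMPCOptimal t αc αd ρ1 ρ2 ρc thor s ys ds) {i j : N} (hij : i ≠ j)
    (hd : 1 ≤ s.x.d i j) : Jx (ys thor).x ≤ Jx s.x - 1 := by
  obtain ⟨k⟩ := ‹Nonempty V›
  obtain ⟨ys', ds', htr', hcost'⟩ :=
    exists_plan_augPlanCost_le ht hαc hαd hrange hρ1 hρ2 hρc hthor hs k hij hd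
  by_contra! hlt
  have hJx : ∀ τ ∈ range thor, (Jx s.x : ℝ) ≤ Jx (ys (τ + 1)).x := fun τ hτ => by
    have := hopt.1.Jx_le (show τ + 1 ≤ thor from mem_range.mp hτ) le_rfl
    exact_mod_cast (show Jx s.x ≤ Jx (ys (τ + 1)).x by omega)
  have := sum_le_sum hJx
  rw [sum_const, card_range, nsmul_eq_mul] at this
  have := le_augPlanCost ht hαc.le hαd hρ1 hρ2 hρc hs hopt.1
  have := hopt.2 ys' ds' htr'
  nlinarith

lemma exists_plan_shift (ht : ∀ i j : N, i ≠ j → 1 ≤ t i j) (hαc : 0 ≤ αc) (hαd : 0 ≤ αd)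
    (hρ1 : 0 ≤ ρ1) (hρ2 : 0 ≤ ρ2) (hρc : 0 ≤ ρc) {n : ℕ} (hs : FeasAugState t αd s)
    (htr : FeasAugTraj t αc αd s (n + 1) ys ds) :
    ∃ ys' ds', FeasAugTraj t αc αd (ys 1) (n + 1) ys' ds' ∧
      augPlanCost t ρ1 ρ2 ρc (n + 1) ys' ds' ≤ augPlanCost t ρ1 ρ2 ρc (n + 1) ys ds
        - Jx (ys 1).x + Jx (ys (n + 1)).x + (ρ2 + ρc) * Fintype.card V := by
  have hfeas := fun m (hm : m ≤ n + 1) => htr.feasAugState ht hαc hαd hs hm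
  set ys' : ℕ → AugState N V :=
    fun τ => if τ ≤ n then ys (τ + 1) else idleStep t αc αd (ys (n + 1))
  set ds' : ℕ → AMoDControl N V := fun τ => if τ < n then ds (τ + 1) else AMoDControl.idle
  have htr' : FeasAugTraj t αc αd (ys 1) (n + 1) ys' ds' := by
    refine ⟨by simp [ys'], fun τ hτ => ?_⟩
    rcases (Nat.lt_succ_iff.mp hτ).lt_or_eq with hτ | rfl
    · simpa [ys', ds', hτ, hτ.le, Nat.succ_le_of_lt hτ] using htr.2 (τ + 1) (by omega)
    · simpa [ys', ds'] using ⟨feasAugControl_idle (hfeas _ le_rfl), rfl⟩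
  refine ⟨ys', ds', htr', ?_⟩
  have hshift : ∀ τ ∈ range n,
      (Jx (ys' (τ + 1)).x : ℝ) + ρ1 * Ju t (ds' τ) - ρ2 * ∑ k, (ys' (τ + 1)).q k
        = (Jx (ys (τ + 1 + 1)).x : ℝ) + ρ1 * Ju t (ds (τ + 1))
          - ρ2 * ∑ k, (ys (τ + 1 + 1)).q k := by
    intro τ hτ
    have := mem_range.mp hτ
    simp [ys', ds', this, Nat.succ_le_of_lt this]
  have hend : ys' (n + 1) = idleStep t αc αd (ys (n + 1)) := by simp [ys']
  have hidle := feasAugState_idleStep ht hαc hαd (hfeas (n + 1) le_rfl) (αc := αc)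
  have hJu : (0 : ℝ) ≤ Ju t (ds 0) := by
    exact_mod_cast Ju_nonneg (htr.2 0 (by omega)).1.feasControl.isControl
  have := mul_nonneg hρ1 hJu
  have := mul_le_mul_of_nonneg_left (hfeas 1 (by omega)).sum_q_le_card hρ2
  have := mul_le_mul_of_nonneg_left (hfeas (n + 1) le_rfl).sum_q_le_card hρc
  have := mul_nonneg hρ2 hidle.sum_q_nonneg
  have := mul_nonneg hρc hidle.sum_q_nonneg
  simp only [augPlanCost]
  rw [sum_range_succ, sum_congr rfl hshift, sum_range_succ', hend,
    show ds' n = AMoDControl.idle by simp [ds'], Ju_idle, Jx_eq_of_d_eq idleStep_d]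
  push_cast
  linarith

lemma neg_le_augPlanCost (ht : ∀ i j : N, i ≠ j → 1 ≤ t i j) (hαc : 0 ≤ αc) (hαd : 0 ≤ αd)
    (hρ1 : 0 ≤ ρ1) (hρ2 : 0 ≤ ρ2) (hρc : 0 ≤ ρc) (hs : FeasAugState t αd s)
    (htr : FeasAugTraj t αc αd s thor ys ds) :
    -((ρ2 * thor + ρc) * Fintype.card V) ≤ augPlanCost t ρ1 ρ2 ρc thor ys ds := by
  have := le_augPlanCost ht hαc hαd hρ1 hρ2 hρc hs htr
  have : (0 : ℝ) ≤ ∑ τ ∈ range thor, (Jx (ys (τ + 1)).x : ℝ) := sum_nonneg fun τ hτ => by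
    exact_mod_cast (htr.feasAugState ht hαc hαd hs (mem_range.mp hτ)).feasState.isState.Jx_nonneg
  linarith

lemma AugMPCOptimal.augPlanCost_add_Jx_le [Nonempty V] (ht : ∀ i j : N, i ≠ j → 1 ≤ t i j)
    (hαc : 0 < αc) (hαd : 0 ≤ αd) (hrange : αd * (tmax t : ℝ) ≤ 1) (hρ1 : 0 ≤ ρ1)
    (hρ2 : 0 ≤ ρ2) (hρc : 0 ≤ ρc) (hthor : 2 * tmax t + 2 * chargeTime t αc αd ≤ thor)
    (hsmall : ρ1 * tmax t + (ρ2 * (thor + 1) + ρc) * Fintype.card V ≤ 1 / 2)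
    (hs : FeasAugState t αd s) (hopt : AugMPCOptimal t αc αd ρ1 ρ2 ρc thor s ys ds)
    {ys' : ℕ → AugState N V} {ds' : ℕ → AMoDControl N V}
    (hopt' : AugMPCOptimal t αc αd ρ1 ρ2 ρc thor (ys 1) ys' ds') {i j : N} (hij : i ≠ j)
    (hd : 1 ≤ s.x.d i j) :
    augPlanCost t ρ1 ρ2 ρc thor ys' ds' + Jx (ys 1).x
      ≤ augPlanCost t ρ1 ρ2 ρc thor ys ds + Jx s.x - 1 / 2 := by
  have hV : (0 : ℝ) ≤ Fintype.card V := Nat.cast_nonneg _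
  have := mul_nonneg hρ1 (Nat.cast_nonneg (α := ℝ) (tmax t))
  have := mul_nonneg (mul_nonneg hρ2 (Nat.cast_nonneg (α := ℝ) thor)) hV
  have := mul_nonneg hρ2 hV
  have hend := hopt.Jx_le_sub_one ht hαc hαd hrange hρ1 hρ2 hρc hthor (by nlinarith) hs hij hd
  obtain ⟨n, rfl⟩ : ∃ n, thor = n + 1 :=
    ⟨thor - 1, by have := t_le_tmax (t := t) hij; have := ht i j hij; omega⟩
  obtain ⟨ys'', ds'', htr'', hcost''⟩ :=
    exists_plan_shift (ρ1 := ρ1) ht hαc.le hαd hρ1 hρ2 hρc hs hopt.1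
  have := hopt'.2 ys'' ds'' htr''
  have : (Jx (ys (n + 1)).x : ℝ) ≤ Jx s.x - 1 := by exact_mod_cast hend
  push_cast at hsmall
  nlinarith

end Descent

lemma exists_lt_of_forall_succ_le_sub {W : ℕ → ℝ} {δ : ℝ} (hδ : 0 < δ)
    (hW : ∀ n, W (n + 1) ≤ W n - δ) (b : ℝ) : ∃ n, W n < b := by
  have hle : ∀ n : ℕ, W n ≤ W 0 - n * δ := by
    intro n
    induction n with
    | zero => simp
    | succ n ih => push_cast; linarith [hW n]
  obtain ⟨n, hn⟩ := exists_nat_gt ((W 0 - b) / δ)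
  refine ⟨n, (hle n).trans_lt ?_⟩
  rw [div_lt_iff₀ hδ] at hn
  linarith

section ClosedLoop

variable {t : N → N → ℕ} {αc αd ρ1 ρ2 ρc : ℝ} {thor : ℕ} {ss : ℕ → AugState N V}
  {cs : ℕ → AMoDControl N V}

lemma AugMPCTraj.feasAugState (ht : ∀ i j : N, i ≠ j → 1 ≤ t i j) (hαc : 0 ≤ αc)
    (hαd : 0 ≤ αd) (hmpc : AugMPCTraj t αc αd ρ1 ρ2 ρc thor ss cs)
    (hs₀ : FeasAugState t αd (ss 0)) (τ : ℕ) : FeasAugState t αd (ss τ) := by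
  induction τ with
  | zero => exact hs₀
  | succ τ ih =>
    exact (hmpc.1 τ).2 ▸ feasAugState_augSucc ht hαc hαd ih isArrivals_zero (hmpc.1 τ).1

lemma AugMPCTraj.antitone_d (hmpc : AugMPCTraj t αc αd ρ1 ρ2 ρc thor ss cs) (i j : N) :
    Antitone fun τ => (ss τ).x.d i j :=
  antitone_nat_of_succ_le fun τ =>
    (hmpc.1 τ).2 ▸ augSucc_d_le (hmpc.1 τ).1.feasControl.isControl i j

lemma AugMPCTraj.exists_d_eq_zero [Nonempty V] (ht : ∀ i j : N, i ≠ j → 1 ≤ t i j)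
    (hαc : 0 < αc) (hαd : 0 ≤ αd) (hrange : αd * (tmax t : ℝ) ≤ 1) (hρ1 : 0 ≤ ρ1)
    (hρ2 : 0 ≤ ρ2) (hρc : 0 ≤ ρc) (hthor : 2 * tmax t + 2 * chargeTime t αc αd ≤ thor)
    (hsmall : ρ1 * tmax t + (ρ2 * (thor + 1) + ρc) * Fintype.card V ≤ 1 / 2)
    (hmpc : AugMPCTraj t αc αd ρ1 ρ2 ρc thor ss cs) (hs₀ : FeasAugState t αd (ss 0)) :
    ∃ T, ∀ i j, (ss T).x.d i j = 0 := by
  have hfeas := hmpc.feasAugState ht hαc.le hαd hs₀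
  choose ys ds hys hds using hmpc.2
  by_contra! hwait
  have hcust : ∀ τ, ∃ i j, i ≠ j ∧ 1 ≤ (ss τ).x.d i j := fun τ => by
    obtain ⟨i, j, hij⟩ := hwait τ
    have hxs := (hfeas τ).feasState.isState
    exact ⟨i, j, fun h => hij (h ▸ hxs.d_diag i), by have := hxs.d_nonneg i j; omega⟩
  obtain ⟨i, j, hij, -⟩ := hcust 0
  have hnext : ∀ τ, ys τ 1 = ss (τ + 1) := fun τ => by
    rw [(hmpc.1 τ).2, ← hds τ, ← (hys τ).1.1]
    exact ((hys τ).1.2 0 (by have := ht i j hij; have := t_le_tmax (t := t) hij; omega)).2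
  obtain ⟨τ, hτ⟩ := exists_lt_of_forall_succ_le_sub (by norm_num : (0 : ℝ) < 1 / 2)
    (W := fun τ => augPlanCost t ρ1 ρ2 ρc thor (ys τ) (ds τ) + Jx (ss τ).x) (fun τ => by
      obtain ⟨i, j, hij, hd⟩ := hcust τ
      have := (hys τ).augPlanCost_add_Jx_le ht hαc hαd hrange hρ1 hρ2 hρc hthor hsmall
        (hfeas τ) ((hnext τ).symm ▸ hys (τ + 1)) hij hd
      rwa [hnext] at this) (-(1 / 2))
  have := neg_le_augPlanCost ht hαc.le hαd hρ1 hρ2 hρc (hfeas τ) (hys τ).1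
  have : (0 : ℝ) ≤ Jx (ss τ).x := by exact_mod_cast (hfeas τ).feasState.isState.Jx_nonneg
  have := mul_nonneg hρ1 (Nat.cast_nonneg (α := ℝ) (tmax t))
  have := mul_nonneg hρ2 (Nat.cast_nonneg (α := ℝ) (Fintype.card V))
  nlinarith

end ClosedLoop

theorem mpc_charging_solves_ARP_general {N V : Type} [Fintype N] [DecidableEq N] [Fintype V]
    [Nonempty V] (t : N → N → ℕ)
    (ht : ∀ i j : N, i ≠ j → 1 ≤ t i j)
    (αc αd : ℝ) (hαc : 0 < αc) (hαd : 0 < αd)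
    (hrange : αd * (tmax t : ℝ) ≤ 1)
    (thor : ℕ)
    (hthor : 2 * tmax t + 2 * (⌈αd / αc * (tmax t : ℝ)⌉).toNat ≤ thor) :
    ∃ ρbar : ℝ, 0 < ρbar ∧
      ∀ ρ1 ρ2 ρc : ℝ, 0 ≤ ρ1 → ρ1 < ρbar → 0 ≤ ρ2 → ρ2 < ρbar → 0 ≤ ρc → ρc < ρbar →
        ∀ (ss : ℕ → AugState N V) (cs : ℕ → AMoDControl N V),
          FeasAugState t αd (ss 0) → AugMPCTraj t αc αd ρ1 ρ2 ρc thor ss cs →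
            ∃ T : ℕ, ∀ τ ≥ T, ∀ i j : N, (ss τ).x.d i j = 0 := by
  set M : ℝ := tmax t + (thor + 2) * Fintype.card V
  have hM : 0 < M := by have := Fintype.card_pos (α := V); positivity
  refine ⟨1 / (2 * M), by positivity,
    fun ρ1 ρ2 ρc hρ1 hρ1' hρ2 hρ2' hρc hρc' ss cs hs₀ hmpc => ?_⟩
  have hsmall : ρ1 * tmax t + (ρ2 * (thor + 1) + ρc) * Fintype.card V ≤ 1 / 2 := by
    have : 1 / (2 * M) * M = 1 / 2 := by field_simp
    have := mul_le_mul_of_nonneg_right hρ1'.le (Nat.cast_nonneg (α := ℝ) (tmax t))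
    have := mul_le_mul_of_nonneg_right hρ2'.le
      (by positivity : (0 : ℝ) ≤ (thor + 1) * Fintype.card V)
    have := mul_le_mul_of_nonneg_right hρc'.le (Nat.cast_nonneg (α := ℝ) (Fintype.card V))
    nlinarith
  obtain ⟨T, hT⟩ :=
    hmpc.exists_d_eq_zero ht hαc hαd.le hrange hρ1 hρ2 hρc hthor hsmall hs₀
  exact ⟨T, fun τ hτ i j => le_antisymm (hT i j ▸ hmpc.antitone_d i j hτ)
    ((hmpc.feasAugState ht hαc.le hαd.le hs₀ τ).feasState.isState.d_nonneg i j)⟩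

/-- **Theorem 2 (asymptotic stability of MPC with charging constraints):** if
`α_d·tmax ≤ 1` and `t_hor ≥ 2·tmax + 2·⌈(α_d/α_c)·tmax⌉`, there is a `ρ̄ > 0` such that
for all weights `0 ≤ ρ₁, ρ₂, ρ_c < ρ̄`, every MPC trajectory of the undisturbed
augmented system from a feasible augmented state eventually has all waiting-customer
counts equal to zero. -/
theorem mpc_charging_solves_ARP {N V : Type} [Fintype N] [DecidableEq N] [Fintype V]
    [Nonempty V] (t : N → N → ℕ) (hcard : 2 ≤ Fintype.card N)
    (ht : ∀ i j : N, i ≠ j → 1 ≤ t i j)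
    (αc αd : ℝ) (hαc : 0 < αc) (hαd : 0 < αd)
    (hrange : αd * (tmax t : ℝ) ≤ 1)
    (thor : ℕ)
    (hthor : 2 * tmax t + 2 * (⌈αd / αc * (tmax t : ℝ)⌉).toNat ≤ thor) :
    ∃ ρbar : ℝ, 0 < ρbar ∧
      ∀ ρ1 ρ2 ρc : ℝ, 0 ≤ ρ1 → ρ1 < ρbar → 0 ≤ ρ2 → ρ2 < ρbar → 0 ≤ ρc → ρc < ρbar →
        ∀ (ss : ℕ → AugState N V) (cs : ℕ → AMoDControl N V),
          FeasAugState t αd (ss 0) → AugMPCTraj t αc αd ρ1 ρ2 ρc thor ss cs →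
            ∃ T : ℕ, ∀ τ ≥ T, ∀ i j : N, (ss τ).x.d i j = 0 :=
  mpc_charging_solves_ARP_general t ht αc αd hαc hαd hrange thor hthor
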